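/- arXiv:2202.02402 — 4 statements merged into one kernel-verified Lean document; each statement's English description precedes it below -/
import Mathlib

section
/- A 2×2 complex matrix of the form [[w, λ],[0, w]] is a contraction (operator norm at most 1) if and only if |λ| ≤ 1 - |w|². -/
/-!
With `r = ‖w‖`, `L = ‖l‖`, the matrix is a contraction iff
`‖w x + l y‖² + ‖w y‖² ≤ ‖x‖² + ‖y‖²` for all `x, y`. The triangle inequality bounds
`‖w x + l y‖` by `r ‖x‖ + L ‖y‖`, with equality once the phase of `x` is aligned, so the
condition only depends on `r, L` and becomes nonnegativity of the real quadratic form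
`(1 - r²) a² - 2 r L a b + (1 - r² - L²) b²` on the quadrant `a, b ≥ 0`. For `r < 1` its
minimum along `b = 1 - r²` is attained at `a = r L` and has the sign of `(1 - r²)² - L²`.
-/

open Complex

theorem forall_nonneg_sq_le_iff {r L : ℝ} (hr : 0 ≤ r) (hL : 0 ≤ L) :
    (∀ a b : ℝ, 0 ≤ a → 0 ≤ b → (r * a + L * b) ^ 2 + (r * b) ^ 2 ≤ a ^ 2 + b ^ 2) ↔
      L ≤ 1 - r ^ 2 := by
  constructor
  · intro h
    have hr1 : r ^ 2 ≤ 1 := by nlinarith [h 1 0 zero_le_one le_rfl]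
    rcases hr1.lt_or_eq with hr1 | hr1
    · have hopt := h (r * L) (1 - r ^ 2) (by positivity) (sub_nonneg.2 hr1.le)
      have hsq : (1 - r ^ 2) * L ^ 2 ≤ (1 - r ^ 2) * (1 - r ^ 2) ^ 2 := by nlinarith
      have hL2 := le_of_mul_le_mul_left hsq (sub_pos.2 hr1)
      nlinarith
    · nlinarith [h 1 1 zero_le_one zero_le_one]
  · intro h a b ha hb
    nlinarith [sq_nonneg (a - r * b), mul_nonneg hL (sq_nonneg (a - r * b)),
      mul_nonneg (sub_nonneg.2 h) (add_nonneg (sq_nonneg a) (sq_nonneg b)),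
      mul_nonneg (mul_nonneg hL (sub_nonneg.2 h)) (sq_nonneg b)]

theorem exists_norm_mul_add_mul_eq (w l : ℂ) {a b : ℝ} (ha : 0 ≤ a) (hb : 0 ≤ b) :
    ∃ x y : ℂ, ‖x‖ = a ∧ ‖y‖ = b ∧ ‖w * x + l * y‖ = ‖w‖ * a + ‖l‖ * b := by
  set u := exp ((l.arg - w.arg : ℝ) * I)
  refine ⟨a * u, b, ?_, ?_, ?_⟩
  · rw [norm_mul, norm_exp_ofReal_mul_I, norm_real, Real.norm_of_nonneg ha, mul_one]
  · rw [norm_real, Real.norm_of_nonneg hb]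
  · have hu : u * exp (w.arg * I) = exp (l.arg * I) := by
      rw [← exp_add]; push_cast; ring_nf
    have hphase : w * (a * u) + l * b = ((‖w‖ * a + ‖l‖ * b : ℝ) : ℂ) * exp (l.arg * I) := by
      push_cast
      linear_combination (a * u) * (norm_mul_exp_arg_mul_I w).symm
        + b * (norm_mul_exp_arg_mul_I l).symm + (‖w‖ * a) * hu
    rw [hphase, norm_mul, norm_exp_ofReal_mul_I, norm_real, mul_one,
      Real.norm_of_nonneg (by positivity)]

theorem forall_sq_norm_le_iff_forall_nonneg (w l : ℂ) :
    (∀ x y : ℂ, ‖w * x + l * y‖ ^ 2 + ‖w * y‖ ^ 2 ≤ ‖x‖ ^ 2 + ‖y‖ ^ 2) ↔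
      ∀ a b : ℝ, 0 ≤ a → 0 ≤ b →
        (‖w‖ * a + ‖l‖ * b) ^ 2 + (‖w‖ * b) ^ 2 ≤ a ^ 2 + b ^ 2 := by
  constructor
  · intro h a b ha hb
    obtain ⟨x, y, rfl, rfl, hxy⟩ := exists_norm_mul_add_mul_eq w l ha hb
    simpa [hxy, norm_mul] using h x y
  · intro h x y
    have htri : ‖w * x + l * y‖ ≤ ‖w‖ * ‖x‖ + ‖l‖ * ‖y‖ :=
      (norm_add_le _ _).trans_eq (by rw [norm_mul, norm_mul])
    calc ‖w * x + l * y‖ ^ 2 + ‖w * y‖ ^ 2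
        ≤ (‖w‖ * ‖x‖ + ‖l‖ * ‖y‖) ^ 2 + (‖w‖ * ‖y‖) ^ 2 := by
          rw [norm_mul]; gcongr
      _ ≤ ‖x‖ ^ 2 + ‖y‖ ^ 2 := h _ _ (norm_nonneg x) (norm_nonneg y)

theorem sq_norm_toEuclideanCLM_triangular_apply (w l : ℂ) (v : EuclideanSpace ℂ (Fin 2)) :
    ‖Matrix.toEuclideanCLM (𝕜 := ℂ) !![w, l; 0, w] v‖ ^ 2 =
      ‖w * v 0 + l * v 1‖ ^ 2 + ‖w * v 1‖ ^ 2 := by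
  simp [EuclideanSpace.norm_sq_eq, Fin.sum_univ_two, Matrix.mulVec, dotProduct]

theorem norm_toEuclideanCLM_triangular_le_one_iff (w l : ℂ) :
    ‖Matrix.toEuclideanCLM (𝕜 := ℂ) !![w, l; 0, w]‖ ≤ 1 ↔
      ∀ x y : ℂ, ‖w * x + l * y‖ ^ 2 + ‖w * y‖ ^ 2 ≤ ‖x‖ ^ 2 + ‖y‖ ^ 2 := by
  simp only [ContinuousLinearMap.opNorm_le_iff zero_le_one, one_mul,
    ← sq_le_sq₀ (norm_nonneg _) (norm_nonneg _), sq_norm_toEuclideanCLM_triangular_apply]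
  simp only [EuclideanSpace.norm_sq_eq, Fin.sum_univ_two]
  exact ⟨fun h x y => by simpa using h !₂[x, y], fun h v => h (v 0) (v 1)⟩

/-- A 2×2 complex matrix of the form [[w, λ],[0, w]] is a contraction (operator norm at
most 1, acting on ℂ² with the Euclidean norm) if and only if |λ| ≤ 1 - |w|². -/
theorem stmt_0 (w l : ℂ) :
    ‖(Matrix.toEuclideanCLM (𝕜 := ℂ) (n := Fin 2)) !![w, l; 0, w]‖ ≤ 1 ↔
      ‖l‖ ≤ 1 - ‖w‖ ^ 2 := by
  rw [norm_toEuclideanCLM_triangular_le_one_iff, forall_sq_norm_le_iff_forall_nonneg,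
    forall_nonneg_sq_le_iff (norm_nonneg w) (norm_nonneg l)]
end

section
/- For G₀(z,w) = 8 + 8 z w̄ − (z w̄)², the identity G₀(z,w)·∂∂̄G₀(z,w) − ∂G₀(z,w)·∂̄G₀(z,w) = 64 − 32 z w̄ − 8 (z w̄)² holds for all z, w ∈ ℂ, and this function is not a non-negative definite kernel on the unit disc. -/
open scoped ComplexOrder

local notation "conj'" => (starRingEnd ℂ)

/-- `K` is a non-negative definite kernel on the set `s`. -/
def IsNNDOn (s : Set ℂ) (K : ℂ → ℂ → ℂ) : Prop :=
  ∀ (p : ℕ) (x : Fin p → ℂ), (∀ i, x i ∈ s) →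
    Matrix.PosSemidef (Matrix.of fun i j : Fin p => K (x i) (x j))

/-- `K` is sesqui-analytic on `s`: holomorphic in the first variable and
anti-holomorphic in the second. -/
def Sesq (s : Set ℂ) (K : ℂ → ℂ → ℂ) : Prop :=
  (∀ w ∈ s, AnalyticOnNhd ℂ (fun z => K z w) s) ∧
    (∀ z ∈ s, AnalyticOnNhd ℂ (fun w => conj' (K z w)) s)

/-- `∂`, the derivative in the first (holomorphic) variable. -/
noncomputable def D (K : ℂ → ℂ → ℂ) (z w : ℂ) : ℂ := deriv (fun u => K u w) z

/-- `∂̄`, the derivative in the conjugate of the second (anti-holomorphic) variable. -/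
noncomputable def Db (K : ℂ → ℂ → ℂ) (z w : ℂ) : ℂ :=
  conj' (deriv (fun u => conj' (K z u)) w)

/-! Both kernels depend only on `t = z w̄`. For `G z w = g (z w̄)` the Wirtinger derivatives
reduce to one-variable ones, `∂G = w̄ g'(t)`, `∂̄G = z g'(t)` and `∂∂̄G = g'(t) + t g''(t)`, which
for `g t = 8 + 8t − t²` turns the identity into polynomial algebra. A kernel `k (z w̄)` takes the
value `k 0` at every pair involving `0`, so testing it at the points `0, 1/2` against the vector
`(1, -1)` gives `k (1/4) - k 0 = -17/2 < 0`. -/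

section CompMulConj

variable (f : ℂ → ℂ) (z w : ℂ)

theorem D_comp_mul_conj :
    D (fun z w => f (z * conj' w)) z w = conj' w * deriv f (z * conj' w) := by
  simpa only [D, mul_comm _ (conj' w), smul_eq_mul] using deriv_comp_mul_left (conj' w) f z

theorem Db_comp_mul_conj :
    Db (fun z w => f (z * conj' w)) z w = z * deriv f (z * conj' w) := by
  have h : (fun u => conj' (f (z * conj' u))) = fun u => (conj' ∘ f ∘ conj') (conj' z * u) := by
    funext u
    simp
  rw [Db, h, deriv_comp_mul_left, deriv_conj_conj]
  simp

theorem D_Db_comp_mul_conj (hf : DifferentiableAt ℂ (deriv f) (z * conj' w)) :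
    D (Db fun z w => f (z * conj' w)) z w =
      deriv f (z * conj' w) + z * conj' w * deriv (deriv f) (z * conj' w) := by
  have h : HasDerivAt (fun u => deriv f (u * conj' w))
      (deriv (deriv f) (z * conj' w) * (1 * conj' w)) z :=
    HasDerivAt.comp (h₂ := deriv f) z hf.hasDerivAt ((hasDerivAt_id' z).mul_const (conj' w))
  rw [D]
  simp only [Db_comp_mul_conj]
  rw [((hasDerivAt_id' z).fun_mul h).deriv]
  ring

end CompMulConj

theorem IsNNDOn.sub_sub_add_nonneg {s : Set ℂ} {K : ℂ → ℂ → ℂ} (hK : IsNNDOn s K)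
    {x y : ℂ} (hx : x ∈ s) (hy : y ∈ s) : 0 ≤ K x x - K x y - K y x + K y y := by
  have hxy : ∀ i, ![x, y] i ∈ s := by
    intro i
    fin_cases i <;> assumption
  convert (hK 2 ![x, y] hxy).dotProduct_mulVec_nonneg ![1, -1] using 1
  simp [Matrix.mulVec, dotProduct, Fin.sum_univ_two]
  ring

/-- For `G₀(z,w) = 8 + 8 z w̄ − (z w̄)²` one has
`G₀ ∂∂̄G₀ − ∂G₀ ∂̄G₀ = 64 − 32 z w̄ − 8 (z w̄)²` for all `z, w ∈ ℂ`, and this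
function is not a non-negative definite kernel on the unit disc. -/
theorem stmt_8 (G₀ : ℂ → ℂ → ℂ)
    (hG₀ : ∀ z w : ℂ, G₀ z w = 8 + 8 * (z * conj' w) - (z * conj' w) ^ 2) :
    (∀ z w : ℂ,
        G₀ z w * D (Db G₀) z w - D G₀ z w * Db G₀ z w =
          64 - 32 * (z * conj' w) - 8 * (z * conj' w) ^ 2) ∧
      ¬ IsNNDOn (Metric.ball (0 : ℂ) 1)
        (fun z w => 64 - 32 * (z * conj' w) - 8 * (z * conj' w) ^ 2) := by
  set g : ℂ → ℂ := fun t => 8 + 8 * t - t ^ 2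
  obtain rfl : G₀ = fun z w => g (z * conj' w) := funext₂ hG₀
  have hg' : deriv g = fun t => 8 - 2 * t := by
    funext t
    have h : HasDerivAt g (8 * 1 - 2 * t ^ 1) t :=
      (((hasDerivAt_id' t).const_mul 8).const_add 8).fun_sub (hasDerivAt_pow 2 t)
    rw [h.deriv]
    ring
  have hg'' : deriv (deriv g) = fun _ => -2 := by
    funext t
    rw [hg', ((hasDerivAt_id' t).const_mul 2 |>.const_sub 8).deriv]
    ring
  refine ⟨fun z w => ?_, fun hK => ?_⟩
  · have hdiff : DifferentiableAt ℂ (deriv g) (z * conj' w) := by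
      rw [hg']
      fun_prop
    rw [D_Db_comp_mul_conj g z w hdiff, D_comp_mul_conj, Db_comp_mul_conj, hg'', hg']
    ring
  · have h0 : (0 : ℂ) ∈ Metric.ball (0 : ℂ) 1 := Metric.mem_ball_self one_pos
    have hhalf : (1 / 2 : ℂ) ∈ Metric.ball (0 : ℂ) 1 := by
      rw [mem_ball_zero_iff]
      norm_num
    have := hK.sub_sub_add_nonneg h0 hhalf
    norm_num [Complex.le_def, map_ofNat] at this
end

section
/- For the Hardy space of the bidisc with kernel (1−z₁w̄₁)⁻¹(1−z₂w̄₂)⁻¹, let S₀ be the closed span of the vectors e_k(z₁,z₂) = Σ_{j=0}^{k} z₁ʲ z₂^{k−j}, each with ‖e_k‖² = k+1. Then the reproducing kernel of S₀ satisfies, on the diagonal, K_{S₀}(z,z) = (1/|z₁−z₂|²)·log( |1−z₁z̄₂|² / ((1−|z₁|²)(1−|z₂|²)) ) for z = (z₁,z₂) ∈ 𝔻² with z₁ ≠ z₂; equivalently Σ_{k≥0} |e_k(z)|²/(k+1) equals this expression. -/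
local notation "conj'" => (starRingEnd ℂ)

/-!
Since `e_k(z₁, z₂) (z₁ - z₂) = z₁^(k+1) - z₂^(k+1)` and `|u - v|² = |u|² + |v|² - 2 Re (u v̄)`,
the `k`-th term of the series times `|z₁ - z₂|²` is
`Re (w₁₁^(k+1) + w₂₂^(k+1) - 2 w₁₂^(k+1)) / (k+1)` with `wᵢⱼ = zᵢ z̄ⱼ` in the unit disc.
Each of the three pieces is summed by the real part of `-log (1 - w) = ∑ w^n / n`,
and `|1 - zᵢ z̄ᵢ| = 1 - |zᵢ|²`.
-/

open Finset ComplexConjugate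

theorem norm_geom_sum₂_mul_norm_sub {𝕜 : Type*} [NormedField 𝕜] (x y : 𝕜) (k : ℕ) :
    ‖∑ j ∈ range (k + 1), x ^ j * y ^ (k - j)‖ * ‖x - y‖ = ‖x ^ (k + 1) - y ^ (k + 1)‖ := by
  rw [← norm_mul, ← geom_sum₂_mul]
  simp

namespace Complex

theorem sq_norm_pow_sub_pow (z₁ z₂ : ℂ) (n : ℕ) :
    ‖z₁ ^ n - z₂ ^ n‖ ^ 2
      = ((z₁ * conj z₁) ^ n).re + ((z₂ * conj z₂) ^ n).re - 2 * ((z₁ * conj z₂) ^ n).re := by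
  simp only [mul_pow, ← map_pow]
  rw [mul_conj, mul_conj, ofReal_re, ofReal_re, Complex.sq_norm, normSq_sub]

theorem norm_one_sub_mul_conj_self {z : ℂ} (hz : ‖z‖ < 1) : ‖1 - z * conj z‖ = 1 - ‖z‖ ^ 2 := by
  have : ‖z‖ ^ 2 < 1 := by nlinarith [norm_nonneg z]
  rw [mul_conj', ← ofReal_pow, ← ofReal_one, ← ofReal_sub, norm_real,
    Real.norm_of_nonneg (by linarith)]

theorem norm_mul_conj_lt_one {u v : ℂ} (hu : ‖u‖ < 1) (hv : ‖v‖ < 1) : ‖u * conj v‖ < 1 := by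
  rw [norm_mul, norm_conj]
  nlinarith [norm_nonneg u, norm_nonneg v]

theorem hasSum_re_pow_succ_div {w : ℂ} (hw : ‖w‖ < 1) :
    HasSum (fun k : ℕ => (w ^ (k + 1)).re / (k + 1)) (-Real.log ‖1 - w‖) := by
  have hlog : HasSum (fun k : ℕ => w ^ (k + 1) / (k + 1)) (-log (1 - w)) := by
    simpa using (hasSum_nat_add_iff' 1).mpr (hasSum_taylorSeries_neg_log hw)
  convert hasSum_re hlog using 1
  · ext k
    rw [← div_ofReal_re]
    push_cast
    rfl
  · simp [log_re]

theorem hasSum_sq_norm_pow_sub_pow_div {z₁ z₂ : ℂ} (h₁ : ‖z₁‖ < 1) (h₂ : ‖z₂‖ < 1) :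
    HasSum (fun k : ℕ => ‖z₁ ^ (k + 1) - z₂ ^ (k + 1)‖ ^ 2 / (k + 1))
      (Real.log (‖1 - z₁ * conj z₂‖ ^ 2 / ((1 - ‖z₁‖ ^ 2) * (1 - ‖z₂‖ ^ 2)))) := by
  have hterm : (fun k : ℕ => ‖z₁ ^ (k + 1) - z₂ ^ (k + 1)‖ ^ 2 / (k + 1)) = fun k : ℕ =>
      ((z₁ * conj z₁) ^ (k + 1)).re / (k + 1) + ((z₂ * conj z₂) ^ (k + 1)).re / (k + 1)
        - 2 * (((z₁ * conj z₂) ^ (k + 1)).re / (k + 1)) := by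
    ext k
    rw [sq_norm_pow_sub_pow]
    ring
  have hpos : 0 < ‖1 - z₁ * conj z₂‖ :=
    norm_pos_iff.2 (sub_ne_zero.2 fun h => (norm_mul_conj_lt_one h₁ h₂).ne (by simp [← h]))
  have hpos₁ : 0 < 1 - ‖z₁‖ ^ 2 := by nlinarith [norm_nonneg z₁]
  have hpos₂ : 0 < 1 - ‖z₂‖ ^ 2 := by nlinarith [norm_nonneg z₂]
  have hval : Real.log (‖1 - z₁ * conj z₂‖ ^ 2 / ((1 - ‖z₁‖ ^ 2) * (1 - ‖z₂‖ ^ 2)))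
      = -Real.log ‖1 - z₁ * conj z₁‖ + -Real.log ‖1 - z₂ * conj z₂‖
        - 2 * -Real.log ‖1 - z₁ * conj z₂‖ := by
    rw [Real.log_div (by positivity) (by positivity), Real.log_mul hpos₁.ne' hpos₂.ne',
      Real.log_pow, norm_one_sub_mul_conj_self h₁, norm_one_sub_mul_conj_self h₂]
    push_cast
    ring
  rw [hterm, hval]
  exact ((hasSum_re_pow_succ_div (norm_mul_conj_lt_one h₁ h₁)).add
    (hasSum_re_pow_succ_div (norm_mul_conj_lt_one h₂ h₂))).sub
    ((hasSum_re_pow_succ_div (norm_mul_conj_lt_one h₁ h₂)).mul_left 2)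

end Complex

/-- For the Hardy space of the bidisc, the reproducing kernel of the span `S₀` of the
vectors `e_k(z₁,z₂) = Σ_{j=0}^{k} z₁ʲ z₂^{k−j}` (with `‖e_k‖² = k+1`) satisfies, on the
diagonal, `Σ_{k≥0} |e_k(z)|²/(k+1) = (1/|z₁−z₂|²) log(|1−z₁z̄₂|²/((1−|z₁|²)(1−|z₂|²)))`
for `z₁ ≠ z₂` in the disc. -/
theorem stmt_17 (z₁ z₂ : ℂ) (h₁ : z₁ ∈ Metric.ball (0 : ℂ) 1)
    (h₂ : z₂ ∈ Metric.ball (0 : ℂ) 1) (hne : z₁ ≠ z₂) :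
    ∑' k : ℕ,
        ‖∑ j ∈ Finset.range (k + 1), z₁ ^ j * z₂ ^ (k - j)‖ ^ 2 / (k + 1)
      = (1 / ‖z₁ - z₂‖ ^ 2) *
          Real.log (‖1 - z₁ * conj' z₂‖ ^ 2 /
            ((1 - ‖z₁‖ ^ 2) * (1 - ‖z₂‖ ^ 2))) := by
  rw [mem_ball_zero_iff] at h₁ h₂
  have hd : ‖z₁ - z₂‖ ≠ 0 := norm_ne_zero_iff.2 (sub_ne_zero.2 hne)
  rw [← ((Complex.hasSum_sq_norm_pow_sub_pow_div h₁ h₂).mul_left _).tsum_eq]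
  congr 1 with k
  rw [← norm_geom_sum₂_mul_norm_sub]
  field_simp
end

section
/- Let z₁ ∈ 𝔻 be fixed and let K_{A₀}(z,z) = (1−|z₁|²)⁻¹(1−|z₂|²)⁻¹ − |z₁−z₂|⁻² log( |1−z₁z̄₂|² / ((1−|z₁|²)(1−|z₂|²)) ) for z₂ ≠ z₁. Then lim_{z₂ → z₁} K_{A₀}(z,z)/|z₁−z₂|² = (1/2)·(1−|z₁|²)⁻⁴. -/
open Filter

local notation "conj'" => (starRingEnd ℂ)

/-!
Write `P = (1 - |z₁|²)(1 - |z₂|²)` and `d = |z₁ - z₂|²`. The identity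
`|1 - z₁ z̄₂|² = P + d` turns the logarithm into `log (1 + x)` with `x = d / P`, and the quotient
becomes `(x - log (1 + x)) / x² · P⁻²`. As `z₂ → z₁` we have `x → 0` and `P → (1 - |z₁|²)²`, while
`(x - log (1 + x)) / x² → 1 / 2` by the second-order Taylor expansion of `log (1 + x)`.
-/

open Topology

theorem abs_sub_log_one_add_div_sq_sub_half_le {t : ℝ} (ht : |t| < 1) (ht0 : t ≠ 0) :
    |(t - Real.log (1 + t)) / t ^ 2 - 1 / 2| ≤ |t| / (1 - |t|) := by
  have htaylor := Real.abs_log_sub_add_sum_range_le (x := -t) (by rwa [abs_neg]) 2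
  norm_num [Finset.sum_range_succ] at htaylor
  have ht2 : 0 < t ^ 2 := by positivity
  have hrw : (t - Real.log (1 + t)) / t ^ 2 - 1 / 2
      = -(-t + t ^ 2 / 2 + Real.log (1 + t)) / t ^ 2 := by
    field_simp
    ring
  rw [hrw, abs_div, abs_neg, abs_of_pos ht2, div_le_iff₀ ht2]
  calc _ ≤ |t| ^ 3 / (1 - |t|) := htaylor
    _ = |t| / (1 - |t|) * t ^ 2 := by rw [← sq_abs t]; ring

theorem tendsto_sub_log_one_add_div_sq :
    Tendsto (fun t : ℝ => (t - Real.log (1 + t)) / t ^ 2) (𝓝[≠] 0) (𝓝 (1 / 2)) := by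
  have hbound : Tendsto (fun t : ℝ => |t| / (1 - |t|)) (𝓝[≠] 0) (𝓝 0) := by
    have hcont : ContinuousAt (fun t : ℝ => |t| / (1 - |t|)) 0 :=
      continuous_abs.continuousAt.div (continuous_const.sub continuous_abs).continuousAt
        (by simp)
    simpa using hcont.tendsto.mono_left nhdsWithin_le_nhds
  have hclose : ∀ᶠ t in 𝓝[≠] (0 : ℝ),
      ‖(t - Real.log (1 + t)) / t ^ 2 - 1 / 2‖ ≤ |t| / (1 - |t|) := by
    filter_upwards [self_mem_nhdsWithin,
      nhdsWithin_le_nhds (eventually_abs_sub_lt (0 : ℝ) one_pos)] with t ht0 ht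
    rw [sub_zero] at ht
    exact abs_sub_log_one_add_div_sq_sub_half_le ht ht0
  simpa using (squeeze_zero_norm' hclose hbound).add_const (1 / 2 : ℝ)

theorem norm_one_sub_mul_conj_sq (z w : ℂ) :
    ‖1 - z * conj' w‖ ^ 2 = (1 - ‖z‖ ^ 2) * (1 - ‖w‖ ^ 2) + ‖z - w‖ ^ 2 := by
  simp only [Complex.sq_norm, Complex.normSq_apply, Complex.sub_re, Complex.sub_im,
    Complex.mul_re, Complex.mul_im, Complex.conj_re, Complex.conj_im, Complex.one_re,
    Complex.one_im]
  ring

theorem inv_sub_inv_mul_log_div_eq {P d : ℝ} (hP : P ≠ 0) (hd : d ≠ 0) :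
    (P⁻¹ - d⁻¹ * Real.log ((P + d) / P)) / d
      = (d / P - Real.log (1 + d / P)) / (d / P) ^ 2 * (P⁻¹) ^ 2 := by
  rw [add_div, div_self hP]
  field_simp

/-- For fixed `z₁ ∈ 𝔻` and
`K_{A₀}(z,z) = (1−|z₁|²)⁻¹(1−|z₂|²)⁻¹ − |z₁−z₂|⁻² log(|1−z₁z̄₂|²/((1−|z₁|²)(1−|z₂|²)))`,
one has `lim_{z₂ → z₁} K_{A₀}(z,z)/|z₁−z₂|² = (1/2)(1−|z₁|²)⁻⁴`. -/
theorem stmt_18 (z₁ : ℂ) (h₁ : z₁ ∈ Metric.ball (0 : ℂ) 1) :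
    Tendsto
      (fun z₂ : ℂ =>
        ((1 - ‖z₁‖ ^ 2)⁻¹ * (1 - ‖z₂‖ ^ 2)⁻¹ -
            (‖z₁ - z₂‖ ^ 2)⁻¹ *
              Real.log (‖1 - z₁ * conj' z₂‖ ^ 2 /
                ((1 - ‖z₁‖ ^ 2) * (1 - ‖z₂‖ ^ 2)))) /
          ‖z₁ - z₂‖ ^ 2)
      (nhdsWithin z₁ (Metric.ball (0 : ℂ) 1 \ {z₁}))
      (nhds ((1 / 2) * ((1 - ‖z₁‖ ^ 2)⁻¹) ^ 4)) := by
  set L := 𝓝[Metric.ball (0 : ℂ) 1 \ {z₁}] z₁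
  set P : ℂ → ℝ := fun z₂ => (1 - ‖z₁‖ ^ 2) * (1 - ‖z₂‖ ^ 2)
  set d : ℂ → ℝ := fun z₂ => ‖z₁ - z₂‖ ^ 2
  have hA : 0 < 1 - ‖z₁‖ ^ 2 := by simpa using h₁
  have hpos : ∀ z₂ ∈ Metric.ball (0 : ℂ) 1 \ {z₁}, 0 < P z₂ ∧ 0 < d z₂ := by
    rintro z₂ ⟨hz₂, hne⟩
    exact ⟨mul_pos hA (by simpa using hz₂),
      pow_pos (norm_pos_iff.2 (sub_ne_zero.2 (Ne.symm hne))) 2⟩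
  have hP : Tendsto P L (𝓝 ((1 - ‖z₁‖ ^ 2) * (1 - ‖z₁‖ ^ 2))) :=
    (Continuous.tendsto (by fun_prop) z₁).mono_left nhdsWithin_le_nhds
  have hd : Tendsto d L (𝓝 0) := by
    simpa [d] using
      (Continuous.tendsto (by fun_prop : Continuous d) z₁).mono_left nhdsWithin_le_nhds
  have hx : Tendsto (fun z₂ => d z₂ / P z₂) L (𝓝[≠] 0) := by
    have hx₀ := hd.div hP (by positivity)
    rw [zero_div] at hx₀
    refine tendsto_nhdsWithin_iff.2 ⟨hx₀, ?_⟩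
    filter_upwards [self_mem_nhdsWithin] with z₂ hz₂
    exact (div_pos (hpos z₂ hz₂).2 (hpos z₂ hz₂).1).ne'
  have hlim := (tendsto_sub_log_one_add_div_sq.comp hx).mul ((hP.inv₀ (by positivity)).pow 2)
  rw [show (1 / 2 : ℝ) * ((1 - ‖z₁‖ ^ 2)⁻¹) ^ 4
      = 1 / 2 * (((1 - ‖z₁‖ ^ 2) * (1 - ‖z₁‖ ^ 2))⁻¹) ^ 2 by rw [mul_inv]; ring]
  refine hlim.congr' ?_
  filter_upwards [self_mem_nhdsWithin] with z₂ hz₂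
  rw [Function.comp_apply, ← inv_sub_inv_mul_log_div_eq (hpos z₂ hz₂).1.ne' (hpos z₂ hz₂).2.ne',
    norm_one_sub_mul_conj_sq, mul_inv]
end
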